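/- arXiv:2512.17638 — 2 statements merged into one kernel-verified Lean document; each statement's English description precedes it below -/
import Mathlib

section
/- Let (C, d, [·,·]) be a differential graded Lie algebra and (i, p, K) a chain contraction of C onto its cohomology H with the side conditions K∘i = 0, p∘K = 0, K∘K = 0. Define the induced binary operation l₂' : H ⊗ H → H by l₂'(x,y) = p[i(x), i(y)]. Then l₂' is graded skew-symmetric and satisfies the graded Jacobi identity up to the boundary of the trilinear map j(x,y,z) = p[K[i(x),i(y)], i(z)] ± cyclic permutations; in particular, since the differential on H is zero, l₂' is a graded Lie bracket on H. -/
/-- **Induced bracket on cohomology.**  Let `(C, d, [·,·])` be a differential (graded)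
Lie algebra and `(i, p, K)` a chain contraction of `C` onto its cohomology `H`
(with zero differential) satisfying the side conditions `K∘i = 0`, `p∘K = 0`, `K∘K = 0`.
The induced operation `l₂'(x,y) = p [i x, i y]` is skew-symmetric and satisfies the
Jacobi identity (the Jacobiator is the boundary of `j(x,y,z) = p[K[ix,iy],iz] ± cyc`,
which vanishes since the differential on `H` is zero); hence `l₂'` is a Lie bracket
on `H`. -/
theorem induced_bracket_is_lie_bracket
    {k : Type*} [Field k] [CharZero k] {C H : Type*}
    [LieRing C] [LieAlgebra k C] [AddCommGroup H] [Module k H]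
    (d : Module.End k C) (hd : d * d = 0)
    (hder : ∀ x y : C, d ⁅x, y⁆ = ⁅d x, y⁆ + ⁅x, d y⁆)
    (i : H →ₗ[k] C) (p : C →ₗ[k] H) (K : Module.End k C)
    (hdi : d ∘ₗ i = 0) (hpd : p ∘ₗ d = 0)
    (hpi : p ∘ₗ i = LinearMap.id)
    (hip : (i ∘ₗ p : Module.End k C) = 1 + d * K + K * d)
    (hKi : K ∘ₗ i = 0) (hpK : p ∘ₗ K = 0) (hKK : K * K = 0)
    (l₂ : H → H → H) (hl₂ : ∀ x y, l₂ x y = p ⁅i x, i y⁆) :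
    (∀ x y, l₂ x y = - l₂ y x) ∧
    (∀ x y z, l₂ (l₂ x y) z + l₂ (l₂ y z) x + l₂ (l₂ z x) y = 0) := by
  have hdi' : ∀ x : H, d (i x) = 0 := fun x => LinearMap.congr_fun hdi x
  have hpd' : ∀ c : C, p (d c) = 0 := fun c => LinearMap.congr_fun hpd c
  -- `i (p u) = u + d (K u)` for cycles `u`
  have hip' : ∀ u : C, d u = 0 → i (p u) = u + d (K u) := by
    intro u hu
    have := LinearMap.congr_fun hip u
    simpa [Module.End.mul_apply, hu] using this
  -- key computation
  have key : ∀ a b c : H, l₂ (l₂ a b) c = p ⁅⁅i a, i b⁆, i c⁆ := by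
    intro a b c
    have hcyc : d ⁅i a, i b⁆ = 0 := by simp [hder, hdi']
    rw [hl₂, hl₂, hip' _ hcyc, add_lie, map_add]
    have : ⁅d (K ⁅i a, i b⁆), i c⁆ = d ⁅K ⁅i a, i b⁆, i c⁆ := by
      simp [hder, hdi']
    rw [this, hpd', add_zero]
  refine ⟨fun x y => by rw [hl₂, hl₂, ← lie_skew, map_neg], fun x y z => ?_⟩
  rw [key, key, key, ← map_add, ← map_add]
  have : ⁅⁅i x, i y⁆, i z⁆ + ⁅⁅i y, i z⁆, i x⁆ + ⁅⁅i z, i x⁆, i y⁆ = 0 := by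
    rw [← lie_skew ⁅i x, i y⁆ (i z), ← lie_skew ⁅i y, i z⁆ (i x),
      ← lie_skew ⁅i z, i x⁆ (i y), ← neg_add, ← neg_add, neg_eq_zero]
    exact lie_jacobi (i z) (i x) (i y)
  rw [this, map_zero]
end

section
/- In the finite-dimensional Hodge-theoretic setting, the operator K := d* ∘ G satisfies: (1) d∘K + K∘d = id − P, where P is the orthogonal projection onto ker Δ; (2) K∘K = 0; (3) K∘i = 0 and p∘K = 0, where i is the inclusion of ker Δ and p the orthogonal projection onto ker Δ. Hence (i, p, K) is a chain contraction with side conditions. -/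
/-!
Write `δ = d*`. Since `d² = 0` and `δ² = 0`, both `d` and `δ` commute with `Δ = dδ + δd`, and
`⟪Δx, x⟫ = ‖dx‖² + ‖δx‖²` shows `ker Δ = ker d ∩ ker δ`, which is orthogonal to `im d` and
`im δ`. Hence `P` annihilates `d` and `δ` on both sides, so `d` and `δ` commute with `Δ + P` and
therefore with its inverse `G`. The identities then reduce to ring manipulations:
`dδG + δGd = ΔG = 1 - PG = 1 - P`, `δGδG = δ²G² = 0`, and `δG = Gδ` vanishes on `ker Δ`.
-/

open LinearMap RealInnerProductSpace

section Ring

variable {R : Type*} [Ring R] {d δ P G : R}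

theorem Commute.of_mul_eq_one {a x y : R} (h : Commute a x) (hxy : x * y = 1) (hyx : y * x = 1) :
    Commute a y :=
  h.units_inv_right (u := ⟨x, y, hxy, hyx⟩)

theorem commute_mul_add_mul_of_mul_self_eq_zero (hd : d * d = 0) (δ : R) :
    Commute d (d * δ + δ * d) := by
  rw [Commute, SemiconjBy, mul_add, add_mul, ← mul_assoc, hd, zero_mul, zero_add, mul_assoc,
    mul_assoc, hd, mul_zero, add_zero]

theorem commute_green_of_mul_self_eq_zero (hd : d * d = 0) (hdP : d * P = 0) (hPd : P * d = 0)
    (hG₁ : (d * δ + δ * d + P) * G = 1) (hG₂ : G * (d * δ + δ * d + P) = 1) : Commute d G :=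
  have hP : Commute d P := by rw [Commute, SemiconjBy, hdP, hPd]
  ((commute_mul_add_mul_of_mul_self_eq_zero hd δ).add_right hP).of_mul_eq_one hG₁ hG₂

theorem mul_green_eq_self (hPd : P * d = 0) (hPδ : P * δ = 0) (hPP : IsIdempotentElem P)
    (hG₁ : (d * δ + δ * d + P) * G = 1) : P * G = P := by
  have hPA : P * (d * δ + δ * d + P) = P := by
    rw [mul_add, mul_add, ← mul_assoc, ← mul_assoc, hPd, hPδ, hPP.eq, zero_mul, zero_mul,
      zero_add, zero_add]
  calc P * G = P * (d * δ + δ * d + P) * G := by rw [hPA]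
    _ = P := by rw [mul_assoc, hG₁, mul_one]

theorem mul_mul_add_mul_mul_eq_one_sub (hdG : Commute d G) (hPG : P * G = P)
    (hG₁ : (d * δ + δ * d + P) * G = 1) : d * (δ * G) + δ * G * d = 1 - P := by
  calc d * (δ * G) + δ * G * d = (d * δ + δ * d + P) * G - P * G := by
        rw [mul_assoc δ, ← hdG.eq]; noncomm_ring
    _ = 1 - P := by rw [hG₁, hPG]

theorem Commute.mul_mul_self_eq_zero (hδG : Commute δ G) (hδ : δ * δ = 0) :
    δ * G * (δ * G) = 0 := by
  rw [mul_assoc, ← mul_assoc G, ← hδG.eq, ← mul_assoc, ← mul_assoc, hδ, zero_mul, zero_mul]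

end Ring

section Projection

variable {V : Type*} [NormedAddCommGroup V] [InnerProductSpace ℝ V]
  (K : Submodule ℝ V) [K.HasOrthogonalProjection] {P : Module.End ℝ V}

theorem Submodule.apply_mem_of_eqOn_of_eqOn_orthogonal (hP₁ : ∀ x ∈ K, P x = x)
    (hP₂ : ∀ x ∈ Kᗮ, P x = 0) (x : V) : P x ∈ K := by
  obtain ⟨y, hy, z, hz, rfl⟩ := K.exists_add_mem_mem_orthogonal x
  rwa [map_add, hP₁ y hy, hP₂ z hz, add_zero]

theorem Submodule.isIdempotentElem_of_eqOn_of_eqOn_orthogonal (hP₁ : ∀ x ∈ K, P x = x)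
    (hP₂ : ∀ x ∈ Kᗮ, P x = 0) : IsIdempotentElem P :=
  LinearMap.ext fun x => hP₁ _ (K.apply_mem_of_eqOn_of_eqOn_orthogonal hP₁ hP₂ x)

end Projection

namespace LinearMap

variable {V : Type*} [NormedAddCommGroup V] [InnerProductSpace ℝ V] [FiniteDimensional ℝ V]
  {d : Module.End ℝ V}

noncomputable def laplacian (d : Module.End ℝ V) : Module.End ℝ V := d * adjoint d + adjoint d * d

theorem adjoint_mul_self_eq_zero (hd : d * d = 0) : adjoint d * adjoint d = 0 := by
  rw [← star_eq_adjoint, ← star_mul, hd, star_zero]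

theorem laplacian_adjoint (d : Module.End ℝ V) : laplacian (adjoint d) = laplacian d := by
  rw [laplacian, laplacian, adjoint_adjoint, add_comm]

theorem inner_laplacian_self (d : Module.End ℝ V) (x : V) :
    ⟪laplacian d x, x⟫ = ‖d x‖ ^ 2 + ‖adjoint d x‖ ^ 2 := by
  rw [laplacian, add_apply, Module.End.mul_apply, Module.End.mul_apply, inner_add_left, adjoint_inner_left,
    real_inner_comm, ← adjoint_inner_left, real_inner_self_eq_norm_sq,
    real_inner_self_eq_norm_sq, add_comm]

theorem mem_ker_laplacian_iff {x : V} :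
    x ∈ ker (laplacian d) ↔ d x = 0 ∧ adjoint d x = 0 := by
  refine ⟨fun hx => ?_, fun ⟨hdx, hδx⟩ => ?_⟩
  · have h := inner_laplacian_self d x
    rw [mem_ker.1 hx, inner_zero_left] at h
    obtain ⟨hdx, hδx⟩ := (add_eq_zero_iff_of_nonneg (sq_nonneg _) (sq_nonneg _)).1 h.symm
    exact ⟨by simpa using hdx, by simpa using hδx⟩
  · rw [mem_ker, laplacian, add_apply, Module.End.mul_apply, Module.End.mul_apply, hdx, hδx, map_zero, map_zero,
      add_zero]

theorem apply_mem_orthogonal_ker_laplacian (d : Module.End ℝ V) (x : V) :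
    d x ∈ (ker (laplacian d))ᗮ := fun y hy => by
  rw [← adjoint_inner_left, (mem_ker_laplacian_iff.1 hy).2, inner_zero_left]

theorem mul_eq_zero_of_forall_mem_ker_laplacian {P : Module.End ℝ V}
    (hP : ∀ x, P x ∈ ker (laplacian d)) : d * P = 0 ∧ adjoint d * P = 0 :=
  ⟨ext fun x => (mem_ker_laplacian_iff.1 (hP x)).1, ext fun x => (mem_ker_laplacian_iff.1 (hP x)).2⟩

theorem mul_eq_zero_of_forall_mem_orthogonal_ker_laplacian {P : Module.End ℝ V}
    (hP : ∀ x ∈ (ker (laplacian d))ᗮ, P x = 0) : P * d = 0 ∧ P * adjoint d = 0 := by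
  refine ⟨ext fun x => hP _ (apply_mem_orthogonal_ker_laplacian d x), ext fun x => hP _ ?_⟩
  rw [← laplacian_adjoint]
  exact apply_mem_orthogonal_ker_laplacian _ x

end LinearMap

/-- **The chain homotopy `K = d* ∘ G`.**  In the finite-dimensional Hodge-theoretic
setting (`d² = 0`, `Δ = d d* + d* d`, `P` the orthogonal projection onto `ker Δ`,
`G = (Δ + P)⁻¹` the Green operator), the operator `K := d* ∘ G` satisfies
`d∘K + K∘d = id − P`, `K∘K = 0`, `K∘i = 0` and `p∘K = 0` (with `i` the inclusion of
`ker Δ` and `p` the orthogonal projection onto `ker Δ`, so `i∘p = P`); hence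
`(i, p, K)` is a chain contraction with side conditions. -/
theorem hodge_homotopy
    {V : Type*} [NormedAddCommGroup V] [InnerProductSpace ℝ V] [FiniteDimensional ℝ V]
    (d : Module.End ℝ V) (hd : d * d = 0) :
    let dstar : Module.End ℝ V := LinearMap.adjoint d
    let Δ : Module.End ℝ V := d * dstar + dstar * d
    ∀ P : Module.End ℝ V,
      (∀ x ∈ LinearMap.ker Δ, P x = x) → (∀ x ∈ (LinearMap.ker Δ)ᗮ, P x = 0) →
    ∀ G : Module.End ℝ V, (Δ + P) * G = 1 → G * (Δ + P) = 1 →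
    let K : Module.End ℝ V := dstar * G
    d * K + K * d = 1 - P ∧
    K * K = 0 ∧
    K ∘ₗ (LinearMap.ker Δ).subtype = 0 ∧
    P * K = 0 := by
  intro dstar Δ P hP₁ hP₂ G hG₁ hG₂ K
  have hdstar : dstar * dstar = 0 := adjoint_mul_self_eq_zero hd
  obtain ⟨hdP, hdstarP⟩ := mul_eq_zero_of_forall_mem_ker_laplacian
    ((ker Δ).apply_mem_of_eqOn_of_eqOn_orthogonal hP₁ hP₂)
  obtain ⟨hPd, hPdstar⟩ := mul_eq_zero_of_forall_mem_orthogonal_ker_laplacian hP₂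
  have hG₁' : (dstar * d + d * dstar + P) * G = 1 := by rwa [add_comm (dstar * d)]
  have hG₂' : G * (dstar * d + d * dstar + P) = 1 := by rwa [add_comm (dstar * d)]
  have hdG : Commute d G := commute_green_of_mul_self_eq_zero hd hdP hPd hG₁ hG₂
  have hdstarG : Commute dstar G := commute_green_of_mul_self_eq_zero hdstar hdstarP hPdstar hG₁' hG₂'
  have hPG : P * G = P := mul_green_eq_self hPd hPdstar
    ((ker Δ).isIdempotentElem_of_eqOn_of_eqOn_orthogonal hP₁ hP₂) hG₁
  refine ⟨mul_mul_add_mul_mul_eq_one_sub hdG hPG hG₁,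
    hdstarG.mul_mul_self_eq_zero hdstar, ?_, by rw [← mul_assoc, hPdstar, zero_mul]⟩
  ext ⟨x, hx⟩
  change (dstar * G) x = 0
  rw [hdstarG.eq, Module.End.mul_apply, (mem_ker_laplacian_iff.1 hx).2, map_zero]
end
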